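/- Let u ∈ ℤ[ω]^n be a vector with ‖u‖² = Σ_j |u_j|² = 1. Then there exists exactly one index j with u_j ≠ 0, and for this index u_j = ω^m for some m ∈ {0, 1, ..., 7}; all other entries of u are 0. -/

import Mathlib

/-! Writing `t = ∑ₖ xₖ ωᵏ` with `xₖ ∈ ℤ`, one has
`|t|² = ∑ₖ xₖ² + √2 (x₀(x₁ - x₃) + x₂(x₁ + x₃))`. Summing over the entries of `u`, the
irrationality of `√2` turns `‖u‖² = 1` into `∑ⱼ ∑ₖ xⱼₖ² = 1`. Hence exactly one entry has a
nonzero coefficient vector, and that vector is `±` a unit vector, i.e. the entry is `±ωᵏ`;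
finally `-ωᵏ = ωᵏ⁺⁴`. -/

noncomputable section

/-- The eighth root of unity `ω = e^{iπ/4} = (1+i)/√2`. -/
def ω : ℂ := (1 + Complex.I) / Real.sqrt 2

/-- A rational number is dyadic if it has the form `a / 2^n` with `a ∈ ℤ`, `n ∈ ℕ`. -/
def IsDyadic (q : ℚ) : Prop := ∃ (a : ℤ) (n : ℕ), q = a / 2 ^ n

/-- Membership in the ring `𝔻[ω] = ℤ[1/√2, i]`: complex numbers of the form
`aω³ + bω² + cω + d` with `a, b, c, d` dyadic rationals. -/
def inDω (t : ℂ) : Prop :=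
  ∃ a b c d : ℚ, IsDyadic a ∧ IsDyadic b ∧ IsDyadic c ∧ IsDyadic d ∧
    t = (a : ℂ) * ω ^ 3 + (b : ℂ) * ω ^ 2 + (c : ℂ) * ω + (d : ℂ)

/-- Membership in the ring `ℤ[ω]`: complex numbers of the form
`aω³ + bω² + cω + d` with `a, b, c, d ∈ ℤ`. -/
def inZω (t : ℂ) : Prop :=
  ∃ a b c d : ℤ, t = (a : ℂ) * ω ^ 3 + (b : ℂ) * ω ^ 2 + (c : ℂ) * ω + (d : ℂ)

theorem Irrational.eq_and_eq_zero_of_intCast_add_mul_intCast_eq {x : ℝ} (hx : Irrational x)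
    {p q r : ℤ} (h : (p : ℝ) + x * q = r) : p = r ∧ q = 0 := by
  have hq : q = 0 := by
    by_contra hq
    exact ((hx.mul_intCast hq).intCast_add p).ne_int r h
  subst hq
  exact ⟨by exact_mod_cast (by simpa using h), rfl⟩

theorem Finset.exists_eq_one_and_eq_zero_of_sum_eq_one {ι : Type*} [Fintype ι] {f : ι → ℤ}
    (hf : ∀ i, 0 ≤ f i) (hsum : ∑ i, f i = 1) : ∃ j, f j = 1 ∧ ∀ l ≠ j, f l = 0 := by
  classical
  obtain ⟨j, hj⟩ : ∃ j, f j ≠ 0 := by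
    by_contra! h
    simp [h] at hsum
  have hsplit := Finset.add_sum_erase Finset.univ f (Finset.mem_univ j)
  have hrest : 0 ≤ ∑ l ∈ Finset.univ.erase j, f l := Finset.sum_nonneg fun l _ => hf l
  have hrest0 : ∑ l ∈ Finset.univ.erase j, f l = 0 := by have := hf j; omega
  refine ⟨j, by omega, fun l hl => ?_⟩
  exact (Finset.sum_eq_zero_iff_of_nonneg fun l _ => hf l).mp hrest0 l (by simpa)

theorem sum_intCast_mul_eq_zero_of_sum_sq_eq_zero {ι R : Type*} [Fintype ι] [Ring R]
    (x : ι → ℤ) (z : ι → R) (h : ∑ k, x k ^ 2 = 0) : ∑ k, (x k : R) * z k = 0 := by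
  have hx : ∀ k, x k = 0 := fun k =>
    pow_eq_zero_iff two_ne_zero |>.mp <|
      (Finset.sum_eq_zero_iff_of_nonneg fun k _ => sq_nonneg (x k)).mp h k (Finset.mem_univ k)
  simp [hx]

theorem omega_sq : ω ^ 2 = Complex.I := by
  have h : ((Real.sqrt 2 : ℝ) : ℂ) ^ 2 = 2 := by norm_cast; simp
  rw [ω, div_pow, h]
  linear_combination Complex.I_sq / 2

theorem omega_pow_four : ω ^ 4 = -1 := by
  rw [show 4 = 2 * 2 from rfl, pow_mul, omega_sq, Complex.I_sq]

theorem omega_ne_zero : ω ≠ 0 := fun h => by simpa [h] using omega_pow_four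

theorem exists_coeffs_of_inZω {t : ℂ} (ht : inZω t) :
    ∃ x : Fin 4 → ℤ, t = ∑ k, (x k : ℂ) * ω ^ (k : ℕ) := by
  obtain ⟨a, b, c, d, rfl⟩ := ht
  refine ⟨![d, c, b, a], ?_⟩
  simp [Fin.sum_univ_four]
  ring

theorem normSq_sum_omega_pow (x : Fin 4 → ℤ) :
    Complex.normSq (∑ k, (x k : ℂ) * ω ^ (k : ℕ)) =
      ((∑ k, x k ^ 2 : ℤ) : ℝ) + Real.sqrt 2 * ((x 0 * (x 1 - x 3) + x 2 * (x 1 + x 3) : ℤ) : ℝ) := by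
  have hs : Real.sqrt 2 ^ 2 = 2 := Real.sq_sqrt (by norm_num)
  have hs0 : Real.sqrt 2 ≠ 0 := by positivity
  have hsum : ∑ k, (x k : ℂ) * ω ^ (k : ℕ) =
      (((x 1 - x 3) / Real.sqrt 2 + x 0 : ℝ) : ℂ) +
        (((x 1 + x 3) / Real.sqrt 2 + x 2 : ℝ) : ℂ) * Complex.I := by
    have hω3 : ω ^ 3 = (Complex.I - 1) / Real.sqrt 2 := by
      rw [pow_succ, omega_sq, ω]
      field_simp
      linear_combination Complex.I_sq
    simp only [Fin.sum_univ_four, Fin.val_zero, Fin.val_one, Fin.val_two]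
    rw [show ((3 : Fin 4) : ℕ) = 3 from rfl, hω3, omega_sq, pow_one, pow_zero, ω]
    push_cast
    field_simp
    ring
  rw [hsum, Complex.normSq_add_mul_I]
  simp only [Fin.sum_univ_four]
  push_cast
  field_simp
  linear_combination
    (-(x 1 ^ 2 + x 3 ^ 2 + Real.sqrt 2 * (x 0 * (x 1 - x 3) + x 2 * (x 1 + x 3))) : ℝ) * hs

theorem exists_omega_pow_of_sum_sq_eq_one (x : Fin 4 → ℤ) (h : ∑ k, x k ^ 2 = 1) :
    ∃ m ≤ 7, ∑ k, (x k : ℂ) * ω ^ (k : ℕ) = ω ^ m := by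
  obtain ⟨j, hj, hrest⟩ :=
    Finset.exists_eq_one_and_eq_zero_of_sum_eq_one (fun k => sq_nonneg (x k)) h
  have hsum : ∑ k, (x k : ℂ) * ω ^ (k : ℕ) = x j * ω ^ (j : ℕ) :=
    Finset.sum_eq_single j (fun l _ hl => by simp [pow_eq_zero_iff two_ne_zero |>.mp (hrest l hl)])
      (by simp)
  have hj3 : (j : ℕ) ≤ 3 := Nat.le_of_lt_succ j.isLt
  rcases sq_eq_one_iff.mp hj with hj | hj
  · exact ⟨j, by omega, by simp [hsum, hj]⟩
  · refine ⟨j + 4, by omega, ?_⟩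
    rw [hsum, hj, pow_add, omega_pow_four]
    push_cast
    ring

/-- If `u ∈ ℤ[ω]^n` has `‖u‖² = 1`, then there is exactly one index `j` with `u_j ≠ 0`;
for this index `u_j = ω^m` for some `m ∈ {0, …, 7}`, and all other entries are `0`. -/
theorem stmt16 (n : ℕ) (u : Fin n → ℂ) (hu : ∀ j, inZω (u j))
    (hnorm : ∑ j, Complex.normSq (u j) = 1) :
    (∃! j, u j ≠ 0) ∧
    ∃ j, (∃ m : ℕ, m ≤ 7 ∧ u j = ω ^ m) ∧ ∀ l, l ≠ j → u l = 0 := by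
  choose x hx using fun j => exists_coeffs_of_inZω (hu j)
  have hsum : ((∑ j, ∑ k, x j k ^ 2 : ℤ) : ℝ) + Real.sqrt 2 *
      ((∑ j, (x j 0 * (x j 1 - x j 3) + x j 2 * (x j 1 + x j 3)) : ℤ) : ℝ) = ((1 : ℤ) : ℝ) := by
    rw [Int.cast_sum, Int.cast_sum, Finset.mul_sum, ← Finset.sum_add_distrib, Int.cast_one, ← hnorm]
    simp only [hx, normSq_sum_omega_pow]
  obtain ⟨j, hj, hrest⟩ := Finset.exists_eq_one_and_eq_zero_of_sum_eq_one
    (fun j => Finset.sum_nonneg fun k _ => sq_nonneg (x j k))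
    (irrational_sqrt_two.eq_and_eq_zero_of_intCast_add_mul_intCast_eq hsum).1
  have hzero : ∀ l ≠ j, u l = 0 := fun l hl => by
    rw [hx l]
    exact sum_intCast_mul_eq_zero_of_sum_sq_eq_zero _ _ (hrest l hl)
  obtain ⟨m, hm, huj⟩ := exists_omega_pow_of_sum_sq_eq_one (x j) hj
  rw [← hx j] at huj
  have hj0 : u j ≠ 0 := huj ▸ pow_ne_zero m omega_ne_zero
  exact ⟨⟨j, hj0, fun l hl => not_imp_comm.mp (hzero l) hl⟩, j, ⟨m, hm, huj⟩, hzero⟩
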